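/- Let θ, D, T, Z be random variables on a common probability space taking values in finite sets. Suppose (i) T and the pair (D, Z) are conditionally independent given θ, and (ii) Z and θ are conditionally independent given D. Then T and Z are conditionally independent given D. -/

import Mathlib

open Finset
open scoped Classical

/-- Probability of an event under a pmf on a finite sample space. -/
noncomputable def pr {Ω : Type*} [Fintype Ω] (p : Ω → ℝ) (E : Ω → Prop) : ℝ :=
  ∑ ω, if E ω then p ω else 0

/-- Conditional probability `p(E | F)`. -/
noncomputable def cpr {Ω : Type*} [Fintype Ω] (p : Ω → ℝ) (E F : Ω → Prop) : ℝ :=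
  pr p (fun ω => E ω ∧ F ω) / pr p F

/-- `X` and `Y` are conditionally independent given `Z`. -/
def CondIndepRV {Ω A B C : Type*} [Fintype Ω] (p : Ω → ℝ)
    (X : Ω → A) (Y : Ω → B) (Z : Ω → C) : Prop :=
  ∀ x y z, 0 < pr p (fun ω => Z ω = z) →
    cpr p (fun ω => X ω = x ∧ Y ω = y) (fun ω => Z ω = z) =
      cpr p (fun ω => X ω = x) (fun ω => Z ω = z) *
      cpr p (fun ω => Y ω = y) (fun ω => Z ω = z)

/-! For `d` with `p(D = d) > 0`, split `p(T, Z, D = d)` and `p(T, D = d)` along the values `θ₀` of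
`θ`. On each fibre, (i) factors `p(T, D, Z, θ₀)` through `p(T, θ₀)`, (ii) factors `p(D, Z, θ₀)`
through `p(Z, D)`, and (i) marginalised over `Z` factors `p(T, D, θ₀)` the same way; comparing the
three identities gives `p(T, Z, D, θ₀) p(D) = p(T, D, θ₀) p(Z, D)`, and summing over `θ₀` gives
`p(T, Z, D) p(D) = p(T, D) p(Z, D)`. -/

section

variable {Ω : Type*} [Fintype Ω] {p : Ω → ℝ}

lemma pr_congr (p : Ω → ℝ) {E F : Ω → Prop} (h : ∀ ω, E ω ↔ F ω) : pr p E = pr p F :=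
  sum_congr rfl fun ω _ => by rw [h ω]

lemma pr_nonneg (hp : ∀ ω, 0 ≤ p ω) (E : Ω → Prop) : 0 ≤ pr p E :=
  sum_nonneg fun ω _ => by split_ifs <;> simp [hp ω]

lemma pr_mono (hp : ∀ ω, 0 ≤ p ω) {E F : Ω → Prop} (h : ∀ ω, E ω → F ω) :
    pr p E ≤ pr p F := by
  refine sum_le_sum fun ω _ => ?_
  by_cases hE : E ω
  · simp [hE, h ω hE]
  · split_ifs <;> simp [hp ω]

lemma pr_and_eq_zero (hp : ∀ ω, 0 ≤ p ω) (E : Ω → Prop) {F : Ω → Prop} (hF : pr p F = 0) :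
    pr p (fun ω => E ω ∧ F ω) = 0 :=
  le_antisymm (hF ▸ pr_mono hp fun _ h => h.2) (pr_nonneg hp _)

lemma pr_eq_sum_fiber {C : Type*} (p : Ω → ℝ) (E : Ω → Prop) (W : Ω → C) :
    pr p E = ∑ c ∈ univ.image W, pr p (fun ω => E ω ∧ W ω = c) := by
  unfold pr
  rw [sum_comm]
  refine sum_congr rfl fun ω _ => ?_
  by_cases hE : E ω <;> simp [hE]

variable {A B C V : Type*} {X : Ω → A} {Y : Ω → B} {W : Ω → C}

/-- The null fibres `W = w`, excluded in `CondIndepRV`, satisfy the product identity as `0 = 0`. -/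
lemma condIndepRV_iff_mul (hp : ∀ ω, 0 ≤ p ω) :
    CondIndepRV p X Y W ↔ ∀ x y w,
      pr p (fun ω => (X ω = x ∧ Y ω = y) ∧ W ω = w) * pr p (fun ω => W ω = w) =
        pr p (fun ω => X ω = x ∧ W ω = w) * pr p (fun ω => Y ω = y ∧ W ω = w) := by
  refine ⟨fun h x y w => ?_, fun h x y w hw => ?_⟩
  · rcases (pr_nonneg hp fun ω => W ω = w).eq_or_lt with hw | hw
    · simp [pr_and_eq_zero hp _ hw.symm, ← hw]
    · have hxy := h x y w hw
      unfold cpr at hxy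
      field_simp at hxy
      exact mul_right_cancel₀ hw.ne' (by linear_combination pr p (fun ω => W ω = w) * hxy)
  · unfold cpr
    rw [div_mul_div_comm, div_eq_div_iff hw.ne' (by positivity), ← h x y w]
    ring

lemma CondIndepRV.of_prod_right {U : Ω → V} (hp : ∀ ω, 0 ≤ p ω)
    (h : CondIndepRV p X (fun ω => (Y ω, U ω)) W) : CondIndepRV p X Y W := by
  rw [condIndepRV_iff_mul hp] at h ⊢
  intro x y w
  rw [pr_eq_sum_fiber p _ U, pr_eq_sum_fiber p (fun ω => Y ω = y ∧ W ω = w) U, sum_mul, mul_sum]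
  refine sum_congr rfl fun u _ => ?_
  convert h x (y, u) w using 2 <;> exact pr_congr p fun ω => by simp only [Prod.mk.injEq]; tauto

end

theorem stmt3_general {Ω Θ D T Z : Type*} [Fintype Ω]
    (p : Ω → ℝ) (hp : ∀ ω, 0 ≤ p ω)
    (θv : Ω → Θ) (Dv : Ω → D) (Tv : Ω → T) (Zv : Ω → Z)
    (hCI1 : CondIndepRV p Tv (fun ω => (Dv ω, Zv ω)) θv)
    (hCI2 : CondIndepRV p Zv θv Dv) :
    CondIndepRV p Tv Zv Dv := by
  have hTD := hCI1.of_prod_right hp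
  rw [condIndepRV_iff_mul hp] at hCI1 hCI2 hTD ⊢
  intro t z d
  rw [pr_eq_sum_fiber p _ θv, pr_eq_sum_fiber p (fun ω => Tv ω = t ∧ Dv ω = d) θv, sum_mul,
    sum_mul]
  refine sum_congr rfl fun θ₀ _ => ?_
  rcases (pr_nonneg hp fun ω => θv ω = θ₀).eq_or_lt with hθ | hθ
  · simp only [pr_and_eq_zero hp _ hθ.symm, zero_mul]
  have hTDZ := hCI1 t (d, z) θ₀
  have hjoint : pr p (fun ω => (Tv ω = t ∧ (Dv ω, Zv ω) = (d, z)) ∧ θv ω = θ₀) =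
      pr p (fun ω => ((Tv ω = t ∧ Zv ω = z) ∧ Dv ω = d) ∧ θv ω = θ₀) :=
    pr_congr p fun ω => by simp only [Prod.mk.injEq]; tauto
  have hDZ : pr p (fun ω => (Dv ω, Zv ω) = (d, z) ∧ θv ω = θ₀) =
      pr p (fun ω => (Zv ω = z ∧ θv ω = θ₀) ∧ Dv ω = d) :=
    pr_congr p fun ω => by simp only [Prod.mk.injEq]; tauto
  rw [hjoint, hDZ] at hTDZ
  have hθD : pr p (fun ω => θv ω = θ₀ ∧ Dv ω = d) = pr p (fun ω => Dv ω = d ∧ θv ω = θ₀) :=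
    pr_congr p fun ω => and_comm
  refine mul_right_cancel₀ hθ.ne' ?_
  linear_combination pr p (fun ω => Dv ω = d) * hTDZ +
    pr p (fun ω => Tv ω = t ∧ θv ω = θ₀) * hCI2 z θ₀ d -
    pr p (fun ω => Zv ω = z ∧ Dv ω = d) * hTD t d θ₀ +
    pr p (fun ω => Tv ω = t ∧ θv ω = θ₀) * pr p (fun ω => Zv ω = z ∧ Dv ω = d) * hθD

theorem stmt3 {Ω Θ D T Z : Type*} [Fintype Ω] [Fintype Θ] [Fintype D] [Fintype T] [Fintype Z]
    (p : Ω → ℝ) (hp : ∀ ω, 0 ≤ p ω) (hps : ∑ ω, p ω = 1)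
    (θv : Ω → Θ) (Dv : Ω → D) (Tv : Ω → T) (Zv : Ω → Z)
    (hCI1 : CondIndepRV p Tv (fun ω => (Dv ω, Zv ω)) θv)
    (hCI2 : CondIndepRV p Zv θv Dv) :
    CondIndepRV p Tv Zv Dv :=
  stmt3_general p hp θv Dv Tv Zv hCI1 hCI2
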